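/- arXiv:2402.09787 — 3 statements merged into one kernel-verified Lean document; each statement's English description precedes it below -/
import Mathlib

section
/- If ψ ∈ L^∞(𝕋) and φ ∈ L⁴(𝕋) is the Riesz projection of ψ (i.e. φ̂(n) = ψ̂(n) for all n ≥ 0 and φ̂(n) = 0 for all n < 0), then ‖φ‖₄ ≤ ‖ψ‖_∞. -/
/-!
The function `χ = φ - ψ` has only negative frequencies. Hence `φ²` has only nonnegative and `χ²`
only negative frequencies, so they are orthogonal in `L²`, and since `φ² - χ² = ψ (2φ - ψ)`,
`‖φ‖₄² = ‖φ²‖₂ ≤ ‖φ² - χ²‖₂ ≤ ‖ψ‖_∞ ‖2φ - ψ‖₂`.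
The Fourier coefficients of `2φ - ψ` are those of `ψ` up to sign, so by Parseval
`‖2φ - ψ‖₂ = ‖ψ‖₂ ≤ ‖ψ‖_∞`.
-/

open MeasureTheory Real Complex AddCircle

noncomputable section

instance : Fact (0 < 2 * Real.pi) := ⟨by positivity⟩

/-- `φ` is the Riesz projection of `ψ`: the Fourier coefficients of `φ` agree with those of `ψ`
for nonnegative indices and vanish for negative indices. -/
def IsRieszProj (ψ φ : AddCircle (2 * Real.pi) → ℂ) : Prop :=
  (∀ n : ℤ, 0 ≤ n → fourierCoeff φ n = fourierCoeff ψ n) ∧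
  (∀ n : ℤ, n < 0 → fourierCoeff φ n = 0)

open ComplexConjugate ENNReal

section Lp

variable {α : Type*} [MeasurableSpace α] {μ : Measure α}

theorem eLpNorm_mul_self {𝕜 : Type*} [NormedDivisionRing 𝕜] (f : α → 𝕜) (p : ℝ≥0∞) :
    eLpNorm (f * f) p μ = eLpNorm f (p * 2) μ ^ 2 := by
  have h := eLpNorm_norm_rpow (p := p) (μ := μ) f two_pos
  simp only [Real.rpow_two, ENNReal.ofReal_ofNat, ENNReal.rpow_two] at h
  rw [← h, ← eLpNorm_norm (f * f)]
  simp [sq]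

theorem MeasureTheory.MemLp.mul_self {𝕜 : Type*} [NormedDivisionRing 𝕜] {f : α → 𝕜} {p : ℝ≥0∞}
    (hf : MemLp f (p * 2) μ) : MemLp (f * f) p μ :=
  ⟨hf.1.mul hf.1, by rw [eLpNorm_mul_self]; exact pow_lt_top hf.2⟩

theorem integral_conj_mul_eq_inner_toLp {f g : α → ℂ} (hf : MemLp f 2 μ) (hg : MemLp g 2 μ) :
    ∫ t, conj (f t) * g t ∂μ = inner ℂ (hf.toLp f) (hg.toLp g) := by
  rw [L2.inner_def]
  refine integral_congr_ae ?_
  filter_upwards [hf.coeFn_toLp, hg.coeFn_toLp] with t hft hgt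
  rw [hft, hgt, RCLike.inner_apply, mul_comm]

theorem eLpNorm_le_eLpNorm_sub_of_integral_conj_mul_eq_zero {f g : α → ℂ} (hf : MemLp f 2 μ)
    (hg : MemLp g 2 μ) (h : ∫ t, conj (f t) * g t ∂μ = 0) :
    eLpNorm f 2 μ ≤ eLpNorm (f - g) 2 μ := by
  rw [integral_conj_mul_eq_inner_toLp hf hg] at h
  rw [← Lp.enorm_toLp hf, ← Lp.enorm_toLp (hf.sub hg), MemLp.toLp_sub hf hg, ← ofReal_norm,
    ← ofReal_norm]
  refine ENNReal.ofReal_le_ofReal ((pow_le_pow_iff_left₀ (norm_nonneg _) (norm_nonneg _)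
    two_ne_zero).mp ?_)
  rw [@norm_sub_sq ℂ, h, map_zero, mul_zero, sub_zero]
  exact le_add_of_nonneg_right (sq_nonneg _)

end Lp

section Fourier

variable {T : ℝ} [Fact (0 < T)]

theorem fourierCoeff.sub {E : Type*} [NormedAddCommGroup E] [NormedSpace ℂ E]
    {f g : AddCircle T → E} (hf : Integrable f haarAddCircle) (hg : Integrable g haarAddCircle) :
    fourierCoeff (f - g) = fourierCoeff f - fourierCoeff g := by
  ext n
  simpa [fourierCoeff, -fourier_apply, smul_sub] using
    integral_sub (hf.fourier_smul (-n)) (hg.fourier_smul (-n))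

theorem MeasureTheory.MemLp.fourierCoeff_toLp {f : AddCircle T → ℂ}
    (hf : MemLp f 2 AddCircle.haarAddCircle) :
    fourierCoeff (hf.toLp f) = fourierCoeff f :=
  fourierCoeff_congr_ae hf.coeFn_toLp

theorem integral_conj_mul_eq_tsum_fourierCoeff {f g : AddCircle T → ℂ}
    (hf : MemLp f 2 haarAddCircle) (hg : MemLp g 2 haarAddCircle) :
    ∫ t, conj (f t) * g t ∂haarAddCircle
      = ∑' n, conj (fourierCoeff f n) * fourierCoeff g n := by
  rw [integral_conj_mul_eq_inner_toLp hf hg, ← fourierBasis.tsum_inner_mul_inner]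
  congr 1 with n
  rw [← inner_conj_symm, ← fourierBasis.repr_apply_apply, ← fourierBasis.repr_apply_apply,
    fourierBasis_repr, fourierBasis_repr, hf.fourierCoeff_toLp, hg.fourierCoeff_toLp]

theorem eLpNorm_two_eq_of_norm_fourierCoeff_eq {f g : AddCircle T → ℂ}
    (hf : MemLp f 2 haarAddCircle) (hg : MemLp g 2 haarAddCircle)
    (h : ∀ n, ‖fourierCoeff f n‖ = ‖fourierCoeff g n‖) :
    eLpNorm f 2 haarAddCircle = eLpNorm g 2 haarAddCircle := by
  rw [← Lp.enorm_toLp hf, ← Lp.enorm_toLp hg, ← ofReal_norm, ← ofReal_norm,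
    ← fourierBasis.repr.norm_map, ← fourierBasis.repr.norm_map,
    lp.norm_eq_tsum_rpow (by norm_num), lp.norm_eq_tsum_rpow (by norm_num)]
  simp_rw [fourierBasis_repr, hf.fourierCoeff_toLp, hg.fourierCoeff_toLp, h]

theorem eLpNorm_two_smul_sub_eq {f g : AddCircle T → ℂ}
    (hf : MemLp f 2 haarAddCircle) (hg : MemLp g 2 haarAddCircle)
    (h_nonneg : ∀ n, 0 ≤ n → fourierCoeff f n = fourierCoeff g n)
    (h_neg : ∀ n < 0, fourierCoeff f n = 0) :
    eLpNorm ((2 : ℂ) • f - g) 2 haarAddCircle = eLpNorm g 2 haarAddCircle := by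
  have hf₂ : MemLp ((2 : ℂ) • f) 2 haarAddCircle := hf.const_smul 2
  refine eLpNorm_two_eq_of_norm_fourierCoeff_eq (hf₂.sub hg) hg fun n => ?_
  rw [fourierCoeff.sub (hf₂.integrable one_le_two) (hg.integrable one_le_two), Pi.sub_apply,
    fourierCoeff.const_smul, smul_eq_mul]
  rcases lt_or_ge n 0 with hn | hn
  · rw [h_neg n hn, mul_zero, zero_sub, norm_neg]
  · rw [h_nonneg n hn, two_mul, add_sub_cancel_right]

theorem fourierCoeff_conj_mul_fourier (f : AddCircle T → ℂ) (n k : ℤ) :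
    fourierCoeff (fun t => conj (f t) * fourier n t) k = conj (fourierCoeff f (n - k)) := by
  rw [fourierCoeff, fourierCoeff, ← integral_conj]
  congr 1 with t
  simp only [smul_eq_mul, map_mul, ← fourier_neg, neg_neg]
  rw [show n - k = -k + n by ring, fourier_add]
  ring

theorem fourierCoeff_mul_eq_tsum {f g : AddCircle T → ℂ}
    (hf : MemLp f 2 haarAddCircle) (hg : MemLp g 2 haarAddCircle) (n : ℤ) :
    fourierCoeff (f * g) n = ∑' k, fourierCoeff f (n - k) * fourierCoeff g k := by
  have hfn : MemLp (fun t => conj (f t) * fourier n t) 2 haarAddCircle :=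
    (memLp_top_of_bound (fourier n).continuous.aestronglyMeasurable 1
      (ae_of_all _ fun t => (Circle.norm_coe _).le)).mul hf.star
  have h : fourierCoeff (f * g) n = ∫ t, conj (conj (f t) * fourier n t) * g t ∂haarAddCircle := by
    rw [fourierCoeff]
    congr 1 with t
    rw [smul_eq_mul, map_mul, Complex.conj_conj, ← fourier_neg, Pi.mul_apply]
    ring
  simp_rw [h, integral_conj_mul_eq_tsum_fourierCoeff hfn hg, fourierCoeff_conj_mul_fourier,
    Complex.conj_conj]

theorem fourierCoeff_mul_eq_zero {f g : AddCircle T → ℂ}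
    (hf : MemLp f 2 haarAddCircle) (hg : MemLp g 2 haarAddCircle) {n : ℤ}
    (h : ∀ k, fourierCoeff f (n - k) = 0 ∨ fourierCoeff g k = 0) :
    fourierCoeff (f * g) n = 0 := by
  rw [fourierCoeff_mul_eq_tsum hf hg]
  refine (tsum_congr fun k => ?_).trans tsum_zero
  rcases h k with h | h <;> simp [h]

theorem fourierCoeff_mul_eq_zero_of_neg {f g : AddCircle T → ℂ}
    (hf : MemLp f 2 haarAddCircle) (hg : MemLp g 2 haarAddCircle)
    (hf₀ : ∀ k < 0, fourierCoeff f k = 0) (hg₀ : ∀ k < 0, fourierCoeff g k = 0) {n : ℤ}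
    (hn : n < 0) : fourierCoeff (f * g) n = 0 :=
  fourierCoeff_mul_eq_zero hf hg fun k =>
    (lt_or_ge k 0).elim (fun hk => .inr (hg₀ k hk)) fun _ => .inl (hf₀ _ (by omega))

theorem fourierCoeff_mul_eq_zero_of_nonneg {f g : AddCircle T → ℂ}
    (hf : MemLp f 2 haarAddCircle) (hg : MemLp g 2 haarAddCircle)
    (hf₀ : ∀ k, 0 ≤ k → fourierCoeff f k = 0) (hg₀ : ∀ k, 0 ≤ k → fourierCoeff g k = 0) {n : ℤ}
    (hn : 0 ≤ n) : fourierCoeff (f * g) n = 0 :=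
  fourierCoeff_mul_eq_zero hf hg fun k =>
    (lt_or_ge k 0).elim (fun _ => .inl (hf₀ _ (by omega))) fun hk => .inr (hg₀ k hk)

theorem integral_conj_mul_eq_zero_of_fourierCoeff {f g : AddCircle T → ℂ}
    (hf : MemLp f 2 haarAddCircle) (hg : MemLp g 2 haarAddCircle)
    (h : ∀ n, fourierCoeff f n = 0 ∨ fourierCoeff g n = 0) :
    ∫ t, conj (f t) * g t ∂haarAddCircle = 0 := by
  rw [integral_conj_mul_eq_tsum_fourierCoeff hf hg]
  refine (tsum_congr fun n => ?_).trans tsum_zero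
  rcases h n with h | h <;> simp [h]

end Fourier

/-- If `ψ ∈ L^∞(𝕋)` and `φ ∈ L⁴(𝕋)` is the Riesz projection of `ψ`, then
`‖φ‖₄ ≤ ‖ψ‖_∞`. -/
theorem riesz_projection_Linfty_to_L4
    (ψ φ : AddCircle (2 * Real.pi) → ℂ)
    (hψ : MemLp ψ ⊤ haarAddCircle) (hφ : MemLp φ 4 haarAddCircle)
    (hproj : IsRieszProj ψ φ) :
    eLpNorm φ 4 haarAddCircle ≤ eLpNorm ψ ⊤ haarAddCircle := by
  obtain ⟨hφ_nonneg, hφ_neg⟩ := hproj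
  rw [show (4 : ℝ≥0∞) = 2 * 2 by norm_num] at hφ ⊢
  have hψ2 : MemLp ψ 2 haarAddCircle := hψ.mono_exponent le_top
  have hφ2 : MemLp φ 2 haarAddCircle := hφ.mono_exponent (by norm_num)
  have hχ : MemLp (φ - ψ) (2 * 2) haarAddCircle := hφ.sub (hψ.mono_exponent le_top)
  have hχ_nonneg : ∀ n, 0 ≤ n → fourierCoeff (φ - ψ) n = 0 := fun n hn => by
    rw [fourierCoeff.sub (hφ2.integrable one_le_two) (hψ2.integrable one_le_two), Pi.sub_apply,
      hφ_nonneg n hn, sub_self]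
  have hχ2 : MemLp (φ - ψ) 2 haarAddCircle := hχ.mono_exponent (by norm_num)
  have horth : ∫ t, conj ((φ * φ) t) * ((φ - ψ) * (φ - ψ)) t ∂haarAddCircle = 0 :=
    integral_conj_mul_eq_zero_of_fourierCoeff hφ.mul_self hχ.mul_self fun n =>
      (lt_or_ge n 0).imp (fourierCoeff_mul_eq_zero_of_neg hφ2 hφ2 hφ_neg hφ_neg)
        (fourierCoeff_mul_eq_zero_of_nonneg hχ2 hχ2 hχ_nonneg hχ_nonneg)
  rw [← ENNReal.pow_le_pow_left_iff two_ne_zero, ← eLpNorm_mul_self]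
  calc eLpNorm (φ * φ) 2 haarAddCircle
      ≤ eLpNorm (φ * φ - (φ - ψ) * (φ - ψ)) 2 haarAddCircle :=
        eLpNorm_le_eLpNorm_sub_of_integral_conj_mul_eq_zero hφ.mul_self hχ.mul_self horth
    _ = eLpNorm (ψ • ((2 : ℂ) • φ - ψ)) 2 haarAddCircle := by
        congr 1 with t
        simp only [Pi.sub_apply, Pi.mul_apply, Pi.smul_apply, smul_eq_mul]
        ring
    _ ≤ eLpNorm ψ ⊤ haarAddCircle * eLpNorm ((2 : ℂ) • φ - ψ) 2 haarAddCircle :=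
        eLpNorm_smul_le_eLpNorm_top_mul_eLpNorm _ ((hφ2.const_smul 2).sub hψ2).1 ψ
    _ ≤ eLpNorm ψ ⊤ haarAddCircle ^ 2 := by
        rw [eLpNorm_two_smul_sub_eq hφ2 hψ2 hφ_nonneg hφ_neg, sq]
        gcongr
        exact eLpNorm_le_eLpNorm_of_exponent_le le_top hψ.1
end
end

section
/- Let s ≥ 1 be a real number, let 0 < p ≤ 4/s, and let w be a complex number with |w| < 1. Then (1/2π) ∫₀^{2π} |1 − w̄ e^{iθ}|^{−p} dθ ≤ (1 − |w|²)^{−p/s}. (Equivalently, ‖k_w‖_p ≤ (1−|w|²)^{−1/s} for the Szegő/Cauchy kernel k_w(z) = (1 − w̄ z)^{−1}, which is the L^q-norm of the extremal kernel whose Riesz projection is k_w, with s = q* the conjugate exponent.) -/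
/-!
With `t = p / 2`, the binomial series `(1 - z)^{-t} = ∑ cₙ(t) zⁿ`, `cₙ(t) = t(t+1)⋯(t+n-1)/n!`
(`Ring.multichoose t n`), turns `|1 - w̄ e^{iθ}|^{-p} = |(1 - w̄ e^{iθ})^{-t}|²` into the square
of a power series on the circle, whose mean is `∑ cₙ(t)² |w|^{2n}` by Parseval. Termwise
`cₙ(t)² ≤ cₙ(t²)`, so the mean is at most `∑ cₙ(t²) |w|^{2n} = (1 - |w|²)^{-t²}`, and
`t² = p²/4 ≤ p/s` is exactly the hypothesis `p ≤ 4/s`.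
-/

open Real Complex
open scoped ComplexConjugate

namespace Ring

theorem multichoose_succ {K : Type*} [Field K] [CharZero K] (t : K) (n : ℕ) :
    multichoose t (n + 1) = (t + n) / (n + 1) * multichoose t n := by
  have h := factorial_nsmul_multichoose_eq_ascPochhammer t (n + 1)
  rw [Polynomial.ascPochhammer_smeval_eq_eval, ascPochhammer_succ_eval,
    ← Polynomial.ascPochhammer_smeval_eq_eval, ← factorial_nsmul_multichoose_eq_ascPochhammer,
    Nat.factorial_succ, mul_nsmul', nsmul_eq_mul, nsmul_eq_mul, nsmul_eq_mul] at h
  have hf : (n.factorial : K) ≠ 0 := by exact_mod_cast n.factorial_ne_zero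
  have hn : (n + 1 : K) ≠ 0 := by exact_mod_cast n.succ_ne_zero
  push_cast at h
  field_simp
  exact mul_left_cancel₀ hf (by linear_combination h)

variable {K : Type*} [Field K] [LinearOrder K] [IsStrictOrderedRing K]

theorem multichoose_nonneg {t : K} (ht : 0 ≤ t) (n : ℕ) : 0 ≤ multichoose t n := by
  induction n with
  | zero => simp
  | succ n ih => rw [multichoose_succ]; positivity

/-- By `multichoose_succ` it suffices that `(t + k)² ≤ (t² + k)(k + 1)`, i.e. `k (t - 1)² ≥ 0`. -/
theorem multichoose_sq_le (t : K) (n : ℕ) : multichoose t n ^ 2 ≤ multichoose (t ^ 2) n := by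
  induction n with
  | zero => simp
  | succ n ih =>
    have hn : (0 : K) < n + 1 := by positivity
    have hratio : ((t + n) / (n + 1)) ^ 2 ≤ (t ^ 2 + n) / (n + 1) := by
      rw [div_pow, div_le_div_iff₀ (by positivity) hn]
      nlinarith [mul_nonneg (Nat.cast_nonneg (α := K) n) (sq_nonneg (t - 1))]
    rw [multichoose_succ, multichoose_succ, mul_pow]
    calc ((t + n) / (n + 1)) ^ 2 * multichoose t n ^ 2
        ≤ ((t + n) / (n + 1)) ^ 2 * multichoose (t ^ 2) n := by gcongr
      _ ≤ (t ^ 2 + n) / (n + 1) * multichoose (t ^ 2) n :=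
        mul_le_mul_of_nonneg_right hratio (multichoose_nonneg (sq_nonneg t) n)

end Ring

theorem mem_eball_zero_one_of_norm_lt_one {E : Type*} [SeminormedAddCommGroup E] {x : E}
    (hx : ‖x‖ < 1) : x ∈ Metric.eball (0 : E) 1 :=
  mem_eball_zero_iff.2 (by simpa [enorm_eq_nnnorm, ← NNReal.coe_lt_one] using hx)

theorem Complex.hasSum_multichoose_mul_pow (a : ℂ) {z : ℂ} (hz : ‖z‖ < 1) :
    HasSum (fun n => Ring.multichoose a n * z ^ n) (1 / (1 - z) ^ a) := by
  simpa [FormalMultilinearSeries.ofScalars_apply_eq, Ring.multichoose_eq, mul_comm] using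
    (one_div_one_sub_cpow_hasFPowerSeriesOnBall_zero a).hasSum
      (mem_eball_zero_one_of_norm_lt_one hz)

theorem Complex.summable_norm_multichoose_mul_pow (a : ℂ) {z : ℂ} (hz : ‖z‖ < 1) :
    Summable fun n => ‖Ring.multichoose a n * z ^ n‖ := by
  have hf := one_div_one_sub_cpow_hasFPowerSeriesOnBall_zero a
  simpa [FormalMultilinearSeries.ofScalars_apply_eq, Ring.multichoose_eq, mul_comm] using
    FormalMultilinearSeries.summable_norm_apply _
      (Metric.eball_subset_eball hf.r_le (mem_eball_zero_one_of_norm_lt_one hz))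

theorem Real.hasSum_multichoose_mul_pow (a : ℝ) {x : ℝ} (hx : |x| < 1) :
    HasSum (fun n => Ring.multichoose a n * x ^ n) (1 / (1 - x) ^ a) := by
  simpa [FormalMultilinearSeries.ofScalars_apply_eq, Ring.multichoose_eq, mul_comm] using
    (one_div_one_sub_rpow_hasFPowerSeriesOnBall_zero a).hasSum
      (mem_eball_zero_one_of_norm_lt_one (by rwa [Real.norm_eq_abs]))

theorem integral_exp_int_mul_mul_I (k : ℤ) :
    ∫ θ in (0 : ℝ)..2 * π, Complex.exp (k * θ * I) = if k = 0 then ((2 * π : ℝ) : ℂ) else 0 := by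
  split_ifs with hk
  · simp [hk]
  · have hc : (k : ℂ) * I ≠ 0 := mul_ne_zero (by exact_mod_cast hk) I_ne_zero
    have hper : Complex.exp (k * I * ((2 * π : ℝ) : ℂ)) = 1 := by
      rw [← Complex.exp_int_mul_two_pi_mul_I k]; push_cast; ring_nf
    simp_rw [mul_right_comm _ _ I]
    rw [integral_exp_mul_complex hc, hper]
    simp

theorem integral_exp_mul_I_pow_mul_conj_pow (n m : ℕ) :
    ∫ θ in (0 : ℝ)..2 * π, Complex.exp (θ * I) ^ n * conj (Complex.exp (θ * I) ^ m)
      = if n = m then ((2 * π : ℝ) : ℂ) else 0 := by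
  have h : ∀ θ : ℝ, Complex.exp (θ * I) ^ n * conj (Complex.exp (θ * I) ^ m)
      = Complex.exp (((n - m : ℤ) : ℂ) * θ * I) := by
    intro θ
    rw [map_pow, ← Complex.exp_conj, ← Complex.exp_nat_mul, ← Complex.exp_nat_mul,
      ← Complex.exp_add, map_mul, conj_ofReal, conj_I]
    push_cast; ring_nf
  simp_rw [h, integral_exp_int_mul_mul_I, sub_eq_zero, Nat.cast_inj]

theorem hasSum_mul_conj_of_summable_norm {f : ℕ → ℂ} (hf : Summable fun n => ‖f n‖) :
    HasSum (fun q : ℕ × ℕ => f q.1 * conj (f q.2)) (‖∑' n, f n‖ ^ 2 : ℝ) := by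
  have hf' : Summable fun n => ‖conj (f n)‖ := by simpa using hf
  rw [ofReal_pow, ← mul_conj', starRingEnd_apply, tsum_star]
  simp_rw [← starRingEnd_apply]
  rw [tsum_mul_tsum_of_summable_norm hf hf']
  exact (summable_mul_of_summable_norm hf hf').hasSum

/-- Parseval: write `‖f‖² = f f̄` as a double series, integrate termwise, and only the diagonal
survives. -/
theorem integral_norm_tsum_mul_exp_mul_I_pow_sq {a : ℕ → ℂ} (ha : Summable fun n => ‖a n‖) :
    ∫ θ in (0 : ℝ)..2 * π, ‖∑' n, a n * Complex.exp (θ * I) ^ n‖ ^ 2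
      = 2 * π * ∑' n, ‖a n‖ ^ 2 := by
  set e : ℝ → ℂ := fun θ => Complex.exp (θ * I)
  have he : ∀ θ, ‖e θ‖ = 1 := fun θ => norm_exp_ofReal_mul_I θ
  set F : ℕ × ℕ → ℝ → ℂ := fun q θ => a q.1 * conj (a q.2) * (e θ ^ q.1 * conj (e θ ^ q.2))
  have hF : ∀ q θ, ‖F q θ‖ = ‖a q.1‖ * ‖a q.2‖ := fun q θ => by simp [F, he]
  have hbound : Summable fun q : ℕ × ℕ => ‖a q.1‖ * ‖a q.2‖ :=
    ha.mul_of_nonneg ha (fun _ => norm_nonneg _) (fun _ => norm_nonneg _)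
  have hpointwise : ∀ θ, HasSum (fun q => F q θ) (‖∑' n, a n * e θ ^ n‖ ^ 2 : ℝ) := by
    intro θ
    have hFθ : (fun q => F q θ) = fun q => a q.1 * e θ ^ q.1 * conj (a q.2 * e θ ^ q.2) := by
      ext q; simp only [F, map_mul]; ring
    rw [hFθ]
    exact hasSum_mul_conj_of_summable_norm (f := fun n => a n * e θ ^ n) (by simpa [he] using ha)
  have hterms : HasSum (fun q => ∫ θ in (0 : ℝ)..2 * π, F q θ)
      (∫ θ in (0 : ℝ)..2 * π, ((‖∑' n, a n * e θ ^ n‖ ^ 2 : ℝ) : ℂ)) :=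
    intervalIntegral.hasSum_integral_of_dominated_convergence (fun q _ => ‖a q.1‖ * ‖a q.2‖)
      (fun q => by fun_prop) (fun q => Filter.Eventually.of_forall fun θ _ => (hF q θ).le)
      (Filter.Eventually.of_forall fun _ _ => hbound) intervalIntegrable_const
      (Filter.Eventually.of_forall fun θ _ => hpointwise θ)
  have hdiag : HasSum (fun q => ∫ θ in (0 : ℝ)..2 * π, F q θ)
      (((2 * π * ∑' n, ‖a n‖ ^ 2 : ℝ)) : ℂ) := by
    have hint : ∀ q, ∫ θ in (0 : ℝ)..2 * π, F q θ
        = a q.1 * conj (a q.2) * if q.1 = q.2 then ((2 * π : ℝ) : ℂ) else 0 := fun q => by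
      rw [intervalIntegral.integral_const_mul, integral_exp_mul_I_pow_mul_conj_pow]
    have hdiag_inj : Function.Injective fun n : ℕ => (n, n) := fun m n h => congrArg Prod.fst h
    have hsq : Summable fun n => ‖a n‖ ^ 2 :=
      (hbound.comp_injective hdiag_inj).congr fun n => (sq _).symm
    rw [← hdiag_inj.hasSum_iff]
    · refine (Complex.hasSum_ofReal.mpr (hsq.hasSum.mul_left (2 * π))).congr_fun fun n => ?_
      simp only [Function.comp_apply, hint, mul_conj']
      push_cast; ring
    · rintro ⟨m, n⟩ hmn
      have hne : m ≠ n := fun h => hmn ⟨m, by rw [h]⟩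
      simp [hint, hne]
  exact_mod_cast (intervalIntegral.integral_ofReal ▸ hterms.unique hdiag)

theorem integral_norm_one_sub_mul_exp_rpow_neg (t : ℝ) {a : ℂ} (ha : ‖a‖ < 1) :
    ∫ θ in (0 : ℝ)..2 * π, ‖1 - a * Complex.exp (θ * I)‖ ^ (-(2 * t))
      = 2 * π * ∑' n, Ring.multichoose t n ^ 2 * (‖a‖ ^ 2) ^ n := by
  set c : ℕ → ℂ := fun n => Ring.multichoose (t : ℂ) n * a ^ n
  have hcast : ∀ n, Ring.multichoose (t : ℂ) n = (Ring.multichoose t n : ℝ) :=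
    fun n => (Ring.map_multichoose ofRealHom t n).symm
  have hpoint : ∀ θ : ℝ, ‖1 - a * Complex.exp (θ * I)‖ ^ (-(2 * t))
      = ‖∑' n, c n * Complex.exp (θ * I) ^ n‖ ^ 2 := by
    intro θ
    have hz : ‖a * Complex.exp (θ * I)‖ < 1 := by rwa [norm_mul, norm_exp_ofReal_mul_I, mul_one]
    simp_rw [c, mul_assoc, ← mul_pow, (Complex.hasSum_multichoose_mul_pow t hz).tsum_eq,
      norm_div, norm_one, norm_cpow_real, one_div, ← Real.rpow_neg (norm_nonneg _),
      ← Real.rpow_natCast, ← Real.rpow_mul (norm_nonneg _)]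
    push_cast; ring_nf
  have hc : Summable fun n => ‖c n‖ := Complex.summable_norm_multichoose_mul_pow t ha
  rw [intervalIntegral.integral_congr fun θ _ => hpoint θ,
    integral_norm_tsum_mul_exp_mul_I_pow_sq hc]
  congr 2 with n
  rw [norm_mul, hcast, norm_real, Real.norm_eq_abs, norm_pow, mul_pow, sq_abs, ← pow_mul,
    mul_comm n, pow_mul]

theorem tsum_multichoose_sq_mul_pow_le (t : ℝ) {x : ℝ} (hx0 : 0 ≤ x) (hx1 : x < 1) :
    ∑' n, Ring.multichoose t n ^ 2 * x ^ n ≤ (1 - x) ^ (-t ^ 2) := by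
  have h := Real.hasSum_multichoose_mul_pow (t ^ 2) (abs_lt.mpr ⟨by linarith, hx1⟩)
  have hle : ∀ n, Ring.multichoose t n ^ 2 * x ^ n ≤ Ring.multichoose (t ^ 2) n * x ^ n :=
    fun n => mul_le_mul_of_nonneg_right (Ring.multichoose_sq_le t n) (pow_nonneg hx0 n)
  calc ∑' n, Ring.multichoose t n ^ 2 * x ^ n
      ≤ ∑' n, Ring.multichoose (t ^ 2) n * x ^ n :=
        (h.summable.of_nonneg_of_le (fun n => by positivity) hle).tsum_le_tsum hle h.summable
    _ = (1 - x) ^ (-t ^ 2) := by rw [h.tsum_eq, one_div, Real.rpow_neg (by linarith)]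

theorem szego_kernel_pth_mean_bound_general
    (s : ℝ) (p : ℝ) (hp0 : 0 < p) (hp : p ≤ 4 / s)
    (w : ℂ) (hw : ‖w‖ < 1) :
    (2 * Real.pi)⁻¹ * ∫ θ in (0:ℝ)..(2 * Real.pi),
        ‖1 - (starRingEnd ℂ) w * Complex.exp ((θ : ℂ) * Complex.I)‖ ^ (-p)
      ≤ (1 - ‖w‖ ^ 2) ^ (-(p / s)) := by
  have hs : 0 < s := (div_pos_iff_of_pos_left four_pos).mp (hp0.trans_le hp)
  have hexp : (p / 2) ^ 2 ≤ p / s := by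
    rw [le_div_iff₀ hs] at hp ⊢
    nlinarith
  have hx0 : 0 ≤ ‖w‖ ^ 2 := sq_nonneg _
  have hx1 : ‖w‖ ^ 2 < 1 := pow_lt_one₀ (norm_nonneg w) hw two_ne_zero
  rw [show -p = -(2 * (p / 2)) by ring,
    integral_norm_one_sub_mul_exp_rpow_neg _ (by rwa [norm_conj]), norm_conj,
    inv_mul_cancel_left₀ (by positivity)]
  calc ∑' n, Ring.multichoose (p / 2) n ^ 2 * (‖w‖ ^ 2) ^ n
      ≤ (1 - ‖w‖ ^ 2) ^ (-(p / 2) ^ 2) := tsum_multichoose_sq_mul_pow_le _ hx0 hx1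
    _ ≤ (1 - ‖w‖ ^ 2) ^ (-(p / s)) :=
        Real.rpow_le_rpow_of_exponent_ge (by linarith) (by linarith) (by linarith)

/-- For `s ≥ 1`, `0 < p ≤ 4/s` and `|w| < 1`:
`(1/2π) ∫₀^{2π} |1 - w̄ e^{iθ}|^{-p} dθ ≤ (1 - |w|²)^{-p/s}`, i.e. the Szegő kernel satisfies
`‖k_w‖_p ≤ (1 - |w|²)^{-1/s}`. -/
theorem szego_kernel_pth_mean_bound
    (s : ℝ) (hs : 1 ≤ s) (p : ℝ) (hp0 : 0 < p) (hp : p ≤ 4 / s)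
    (w : ℂ) (hw : ‖w‖ < 1) :
    (2 * Real.pi)⁻¹ * ∫ θ in (0:ℝ)..(2 * Real.pi),
        ‖1 - (starRingEnd ℂ) w * Complex.exp ((θ : ℂ) * Complex.I)‖ ^ (-p)
      ≤ (1 - ‖w‖ ^ 2) ^ (-(p / s)) :=
  szego_kernel_pth_mean_bound_general s p hp0 hp w hw
end

section
/- For every p > 0 there exists w ∈ (0,1) with the following properties: the Poisson kernel P_w(e^{iθ}) = (1 − w²)/|1 − w e^{iθ}|² satisfies P_w ≥ 0 and ‖P_w‖₁ = 1; the function k_w(e^{iθ}) = (1 − w e^{iθ})^{−1} is the Riesz projection of P_w (indeed P̂_w(n) = w^{|n|} for n ∈ ℤ); and ‖k_w‖_p > 1 = ‖P_w‖₁. In particular, for no p > 0 does the contractive inequality ‖P₊ψ‖_p ≤ ‖ψ‖₁ hold for all ψ ∈ L¹(𝕋), so the critical exponent satisfies 𝔭(1) ≤ 0 (and together with the geometric-mean bound, 𝔭(1) = 0). -/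
open MeasureTheory Real Complex AddCircle

noncomputable section

/-- The Poisson kernel at `w ∈ (0,1)`: `P_w(e^{iθ}) = (1 - w²)/|1 - w e^{iθ}|²`
(as a complex-valued function on the circle). -/
def poissonKer (w : ℝ) : AddCircle (2 * Real.pi) → ℂ := fun x =>
  (((1 - w ^ 2) / ‖1 - (w : ℂ) * fourier 1 x‖ ^ 2 : ℝ) : ℂ)

/-- The Szegő kernel at `w ∈ (0,1)`: `k_w(e^{iθ}) = (1 - w e^{iθ})⁻¹`. -/
def szegoKer (w : ℝ) : AddCircle (2 * Real.pi) → ℂ := fun x =>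
  (1 - (w : ℂ) * fourier 1 x)⁻¹

/-!
Summing the geometric series `k_w = ∑_{n ≥ 0} w ^ n e_n` and its conjugate gives
`P_w = k_w + conj k_w - 1 = ∑_{n : ℤ} w ^ |n| e_n`; the Fourier coefficients, the Riesz
projection and, since `P_w ≥ 0`, `‖P_w‖₁ = P̂_w(0) = 1` can be read off from this expansion.
For the norm of `k_w`, the function `log |k_w| = -log |e^{iθ} - w|` has mean zero on the circle
(mean value property of `log |z - w|`, `|w| < 1`), so with `g = p log |k_w|` we get
`∫ |k_w| ^ p = ∫ exp g > 1 + ∫ g = 1`, because `exp t ≥ 1 + t` with equality only at `t = 0`,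
and `g` is continuous and nonzero at `θ = 0`.
-/

open ComplexConjugate

section FourierSeries

variable {T : ℝ}

theorem norm_fourier_apply (n : ℤ) (x : AddCircle T) : ‖fourier n x‖ = 1 := Circle.norm_coe _

theorem fourier_natCast_apply (n : ℕ) (x : AddCircle T) : fourier n x = fourier 1 x ^ n := by
  simp [fourier_apply, toCircle_nsmul]

variable [Fact (0 < T)]

theorem fourierCoeff_eq_of_hasSum {f : AddCircle T → ℂ} {a : ℤ → ℂ}
    (ha : Summable fun m => ‖a m‖) (hf : ∀ x, HasSum (fun m => a m * fourier m x) (f x))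
    (n : ℤ) : fourierCoeff f n = a n := by
  set F : ℤ → AddCircle T → ℂ := fun m x => fourier (-n) x • (a m * fourier m x)
  have hnorm (m : ℤ) (x : AddCircle T) : ‖F m x‖ = ‖a m‖ := by
    simp only [F, norm_smul, norm_mul, norm_fourier_apply, one_mul, mul_one]
  have hint (m : ℤ) : Integrable (F m) haarAddCircle :=
    (((fourier m).continuous.const_mul (a m)).integrable_of_hasCompactSupport
      (.of_compactSpace _)).fourier_smul (-n)
  have hterm (m : ℤ) : ∫ x, F m x ∂haarAddCircle = (Pi.single n (a n) : ℤ → ℂ) m := by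
    rw [← fourierCoeff, fourierCoeff.const_mul, fourierCoeff_fourier]
    rcases eq_or_ne m n with rfl | hmn
    · simp
    · simp [hmn, hmn.symm]
  have htsum (x : AddCircle T) : ∑' m, F m x = fourier (-n) x • f x :=
    ((hf x).const_smul _).tsum_eq
  have hsum := hasSum_integral_of_summable_integral_norm hint (by simpa [hnorm] using ha)
  simp only [hterm, htsum] at hsum
  exact (hasSum_pi_single n (a n)).unique hsum |>.symm

end FourierSeries

theorem integral_comp_fourier_one_eq_circleAverage {E : Type*} [NormedAddCommGroup E]
    [NormedSpace ℝ E] (g : ℂ → E) :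
    ∫ x : AddCircle (2 * π), g (fourier 1 x) ∂haarAddCircle = circleAverage g 0 1 := by
  rw [integral_haarAddCircle, ← AddCircle.intervalIntegral_preimage (2 * π) 0, zero_add,
    circleAverage_def]
  congr 2 with θ
  rw [fourier_coe_apply, circleMap_zero]
  push_cast
  field_simp

theorem one_lt_integral_exp_of_integral_eq_zero {α : Type*} [MeasurableSpace α] {μ : Measure α}
    [IsProbabilityMeasure μ] {g : α → ℝ} (hg : Integrable g μ)
    (hexp : Integrable (fun x => Real.exp (g x)) μ) (hmean : ∫ x, g x ∂μ = 0) (hne : ¬g =ᵐ[μ] 0) :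
    1 < ∫ x, Real.exp (g x) ∂μ := by
  set h : α → ℝ := fun x => Real.exp (g x) - 1 - g x
  have hexp_sub : Integrable (fun x => Real.exp (g x) - 1) μ := hexp.sub (integrable_const 1)
  have hsupp : Function.support g ⊆ Function.support h := fun x hx => by
    have := add_one_lt_exp hx
    simp only [Function.mem_support, h]
    linarith
  have hpos : 0 < ∫ x, h x ∂μ := by
    refine (integral_pos_iff_support_of_nonneg (fun x => ?_) (hexp_sub.sub hg)).mpr ?_
    · show 0 ≤ Real.exp (g x) - 1 - g x
      linarith [add_one_le_exp (g x)]
    · exact (pos_iff_ne_zero.mpr fun h0 => hne (ae_iff.mpr h0)).trans_le (measure_mono hsupp)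
  rw [integral_sub hexp_sub hg, integral_sub hexp (integrable_const 1), hmean, integral_const,
    probReal_univ, one_smul] at hpos
  linarith

section Kernels

variable {w : ℝ}

theorem norm_ofReal_mul_fourier_apply (w : ℝ) (n : ℤ) (x : AddCircle (2 * π)) :
    ‖(w : ℂ) * fourier n x‖ = |w| := by
  rw [norm_mul, norm_fourier_apply, mul_one, Complex.norm_real, Real.norm_eq_abs]

theorem one_sub_ofReal_mul_fourier_ne_zero (hw : |w| < 1) (n : ℤ) (x : AddCircle (2 * π)) :
    1 - (w : ℂ) * fourier n x ≠ 0 := by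
  rw [sub_ne_zero]
  intro h
  have := norm_ofReal_mul_fourier_apply w n x
  rw [← h, norm_one] at this
  linarith

theorem continuous_szegoKer (hw : |w| < 1) : Continuous (szegoKer w) :=
  (continuous_const.sub (continuous_const.mul (fourier 1).continuous)).inv₀
    (one_sub_ofReal_mul_fourier_ne_zero hw 1)

theorem hasSum_szegoKer (hw : |w| < 1) (x : AddCircle (2 * π)) :
    HasSum (fun n : ℕ => (w : ℂ) ^ n * fourier n x) (szegoKer w x) := by
  have := hasSum_geometric_of_norm_lt_one
    ((norm_ofReal_mul_fourier_apply w 1 x).trans_lt hw)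
  simp only [mul_pow, ← fourier_natCast_apply] at this
  exact this

theorem poissonKer_eq (hw : |w| < 1) (x : AddCircle (2 * π)) :
    poissonKer w x = szegoKer w x + conj (szegoKer w x) - 1 := by
  have hd : 1 - (w : ℂ) * fourier 1 x ≠ 0 := one_sub_ofReal_mul_fourier_ne_zero hw 1 x
  rw [poissonKer, szegoKer, Complex.ofReal_div, Complex.ofReal_pow, ← mul_conj', map_inv₀]
  set z := fourier 1 x
  have hz : z * conj z = 1 := by
    rw [mul_conj', norm_fourier_apply, Complex.ofReal_one, one_pow]
  have hd' : 1 - (w : ℂ) * conj z ≠ 0 := by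
    simpa using (map_ne_zero (starRingEnd ℂ)).mpr hd
  simp only [map_sub, map_one, map_mul, Complex.conj_ofReal]
  push_cast
  field_simp
  linear_combination (w : ℂ) ^ 2 * hz

theorem hasSum_poissonKer (hw : |w| < 1) (x : AddCircle (2 * π)) :
    HasSum (fun n : ℤ => ((w ^ n.natAbs : ℝ) : ℂ) * fourier n x) (poissonKer w x) := by
  have hpos : HasSum (fun n : ℕ => ((w ^ (n : ℤ).natAbs : ℝ) : ℂ) * fourier n x)
      (szegoKer w x) := by
    simp only [Int.natAbs_natCast, Complex.ofReal_pow]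
    exact hasSum_szegoKer hw x
  have hneg : HasSum (fun n : ℕ => ((w ^ (-(n : ℤ)).natAbs : ℝ) : ℂ) * fourier (-n) x)
      (conj (szegoKer w x)) := by
    have := Complex.hasSum_conj'.mpr (hasSum_szegoKer hw x)
    simp only [map_mul, map_pow, Complex.conj_ofReal, ← fourier_neg] at this
    simp only [Int.natAbs_neg, Int.natAbs_natCast, Complex.ofReal_pow]
    exact this
  have := HasSum.of_nat_of_neg (f := fun n : ℤ => ((w ^ n.natAbs : ℝ) : ℂ) * fourier n x) hpos hneg
  rwa [Int.natAbs_zero, pow_zero, Complex.ofReal_one, fourier_zero, mul_one,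
    ← poissonKer_eq hw x] at this

theorem summable_norm_ofReal_pow_natAbs (hw : |w| < 1) :
    Summable fun n : ℤ => ‖((w ^ n.natAbs : ℝ) : ℂ)‖ := by
  have h : Summable fun n : ℕ => |w| ^ n := summable_geometric_of_lt_one (abs_nonneg w) hw
  refine .of_nat_of_neg ?_ ?_ <;>
    simpa only [Complex.norm_real, Real.norm_eq_abs, abs_pow, Int.natAbs_neg,
      Int.natAbs_natCast] using h

theorem fourierCoeff_poissonKer (hw : |w| < 1) (n : ℤ) :
    fourierCoeff (poissonKer w) n = ((w ^ n.natAbs : ℝ) : ℂ) :=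
  fourierCoeff_eq_of_hasSum (summable_norm_ofReal_pow_natAbs hw) (hasSum_poissonKer hw) n

theorem fourierCoeff_szegoKer (hw : |w| < 1) (n : ℤ) :
    fourierCoeff (szegoKer w) n = if 0 ≤ n then ((w ^ n.natAbs : ℝ) : ℂ) else 0 := by
  set a : ℤ → ℂ := fun n => if 0 ≤ n then ((w ^ n.natAbs : ℝ) : ℂ) else 0
  refine fourierCoeff_eq_of_hasSum (a := a) ?_ (fun x => ?_) n
  · refine .of_nonneg_of_le (fun _ => norm_nonneg _) (fun m => ?_)
      (summable_norm_ofReal_pow_natAbs hw)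
    simp only [a]
    split_ifs <;> simp
  · have hpos : HasSum (fun n : ℕ => a n * fourier n x) (szegoKer w x) := by
      simp only [a, Nat.cast_nonneg, if_true, Int.natAbs_natCast, Complex.ofReal_pow]
      exact hasSum_szegoKer hw x
    have hneg : HasSum (fun n : ℕ => a (-(n + 1)) * fourier (-(n + 1)) x) 0 := by
      have ha (m : ℕ) : a (-(m + 1)) = 0 := if_neg (by omega)
      simp only [ha, zero_mul]
      exact hasSum_zero
    simpa using HasSum.of_nat_of_neg_add_one (f := fun n : ℤ => a n * fourier n x) hpos hneg

theorem isRieszProj_poissonKer_szegoKer (hw : |w| < 1) :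
    IsRieszProj (poissonKer w) (szegoKer w) :=
  ⟨fun n hn => by rw [fourierCoeff_szegoKer hw, fourierCoeff_poissonKer hw, if_pos hn],
    fun n hn => by rw [fourierCoeff_szegoKer hw, if_neg (not_le.mpr hn)]⟩

theorem poissonKer_re_nonneg (hw : |w| ≤ 1) (x : AddCircle (2 * π)) :
    0 ≤ (poissonKer w x).re := by
  rw [poissonKer, Complex.ofReal_re]
  have : w ^ 2 ≤ 1 := sq_le_one_iff_abs_le_one w |>.mpr hw
  exact div_nonneg (by linarith) (by positivity)

theorem integral_norm_poissonKer (hw : |w| < 1) :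
    ∫ x, ‖poissonKer w x‖ ∂haarAddCircle = 1 := by
  have hcont : Continuous (poissonKer w) :=
    (((continuous_szegoKer hw).add (continuous_conj.comp (continuous_szegoKer hw))).sub
      continuous_const).congr fun x => (poissonKer_eq hw x).symm
  have hmean : ∫ x, poissonKer w x ∂haarAddCircle = 1 := by
    simpa [fourierCoeff] using fourierCoeff_poissonKer hw 0
  have hnorm (x : AddCircle (2 * π)) : ‖poissonKer w x‖ = RCLike.re (poissonKer w x) := by
    have h := poissonKer_re_nonneg hw.le x
    rw [poissonKer, Complex.ofReal_re] at h
    rw [RCLike.re_to_complex, poissonKer, Complex.ofReal_re, Complex.norm_of_nonneg h]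
  simp only [hnorm]
  rw [integral_re (hcont.integrable_of_hasCompactSupport (.of_compactSpace _)), hmean]
  rfl

theorem norm_one_sub_ofReal_mul_fourier_one (w : ℝ) (x : AddCircle (2 * π)) :
    ‖1 - (w : ℂ) * fourier 1 x‖ = ‖fourier 1 x - w‖ := by
  set z := fourier 1 x
  have hz : z * conj z = 1 := by
    rw [mul_conj', norm_fourier_apply, Complex.ofReal_one, one_pow]
  have : 1 - (w : ℂ) * z = z * conj (z - w) := by
    rw [map_sub, Complex.conj_ofReal]
    linear_combination -hz
  rw [this, norm_mul, norm_fourier_apply, one_mul, Complex.norm_conj]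

theorem integral_log_norm_szegoKer (hw : |w| < 1) :
    ∫ x, Real.log ‖szegoKer w x‖ ∂haarAddCircle = 0 := by
  have h := circleAverage_log_norm_sub_const₀ (a := (w : ℂ)) (by simpa using hw)
  rw [← integral_comp_fourier_one_eq_circleAverage] at h
  simp only [szegoKer, norm_inv, Real.log_inv, norm_one_sub_ofReal_mul_fourier_one, integral_neg,
    h, neg_zero]

theorem one_lt_integral_norm_szegoKer_rpow (hw : |w| < 1) (hw0 : w ≠ 0) {p : ℝ} (hp : p ≠ 0) :
    1 < ∫ x, ‖szegoKer w x‖ ^ p ∂haarAddCircle := by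
  have hk (x : AddCircle (2 * π)) : ‖szegoKer w x‖ ≠ 0 :=
    norm_ne_zero_iff.mpr (inv_ne_zero (one_sub_ofReal_mul_fourier_ne_zero hw 1 x))
  set g : AddCircle (2 * π) → ℝ := fun x => Real.log ‖szegoKer w x‖ * p
  have hg : Continuous g := ((continuous_szegoKer hw).norm.log hk).mul continuous_const
  have hrpow (x : AddCircle (2 * π)) : ‖szegoKer w x‖ ^ p = Real.exp (g x) :=
    rpow_def_of_pos ((norm_nonneg _).lt_of_ne' (hk x)) p
  have hg0 : g 0 ≠ 0 := by
    have h1w : 0 < 1 - w := by linarith [le_abs_self w]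
    have : szegoKer w 0 = ((1 - w : ℝ) : ℂ)⁻¹ := by simp [szegoKer]
    simp only [g, this, norm_inv, Complex.norm_real, Real.norm_of_nonneg h1w.le, Real.log_inv]
    exact mul_ne_zero (neg_ne_zero.mpr (Real.log_ne_zero_of_pos_of_ne_one h1w (by simpa))) hp
  simp only [hrpow]
  refine one_lt_integral_exp_of_integral_eq_zero
    (hg.integrable_of_hasCompactSupport (.of_compactSpace _))
    ((Real.continuous_exp.comp hg).integrable_of_hasCompactSupport (.of_compactSpace _)) ?_ ?_
  · rw [integral_mul_const, integral_log_norm_szegoKer hw, zero_mul]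
  · rw [hg.ae_eq_iff_eq haarAddCircle continuous_zero]
    exact fun h => hg0 (congrFun h 0)

end Kernels

/-- For every `p > 0` there is `w ∈ (0,1)` such that the Poisson kernel `P_w`
is nonnegative with `‖P_w‖₁ = 1`, has Fourier coefficients `P̂_w(n) = w^{|n|}`, has the Szegő
kernel `k_w` as its Riesz projection, and yet `‖k_w‖_p > 1 = ‖P_w‖₁`.  Hence for no `p > 0` is
the Riesz projection a contraction from `L¹(𝕋)` into `L^p`, so `𝔭(1) ≤ 0` (and `𝔭(1) = 0`). -/
theorem critical_exponent_at_one
    (p : ℝ) (hp : 0 < p) :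
    ∃ w : ℝ, 0 < w ∧ w < 1 ∧
      (∀ x, 0 ≤ (poissonKer w x).re ∧ (poissonKer w x).im = 0) ∧
      (∫ x, ‖poissonKer w x‖ ∂haarAddCircle) = 1 ∧
      (∀ n : ℤ, fourierCoeff (poissonKer w) n = ((w ^ n.natAbs : ℝ) : ℂ)) ∧
      IsRieszProj (poissonKer w) (szegoKer w) ∧
      1 < (∫ x, ‖szegoKer w x‖ ^ p ∂haarAddCircle) ^ (1 / p) := by
  have hw : |(1 / 2 : ℝ)| < 1 := by norm_num [abs_of_pos]
  refine ⟨1 / 2, by norm_num, by norm_num, fun x => ⟨poissonKer_re_nonneg hw.le x,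
    Complex.ofReal_im _⟩, integral_norm_poissonKer hw, fourierCoeff_poissonKer hw,
    isRieszProj_poissonKer_szegoKer hw, ?_⟩
  exact one_lt_rpow (one_lt_integral_norm_szegoKer_rpow hw (by norm_num) hp.ne') (by positivity)
end
end
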